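/- Let μ be the Lie bracket on ℝ^7 with nonzero basis brackets [e1,e2]=e4, [e1,e4]=e5, [e1,e5]=e6, [e1,e6]=e7, [e2,e3]=e6+e7, [e3,e4]=-e7. Then φ = diag(0,1,0,1,1,1,1) is a derivation of (ℝ^7,μ) and φ is pre-Einstein, i.e. trace(φ∘ψ) = trace(ψ) for every derivation ψ of (ℝ^7,μ). -/

import Mathlib

/-! With `e 1, e 3, e 4, e 5, e 6` of weight `1` and `e 0, e 2` of weight `0` every bracket is
homogeneous, so `φ = diag (0, 1, 0, 1, 1, 1, 1)` is a derivation, and `trace (φ ∘ ψ) = trace ψ`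
says exactly `ψ₀₀ + ψ₂₂ = 0` (indices from `0`, `ψᵢⱼ = ψ (e j) i`). Both entries in fact vanish
for every derivation `ψ`: along the chain `e 1 ↦ e 3 ↦ e 4 ↦ e 5 ↦ e 6` of `ad (e 0)` the diagonal
entries of `ψ` grow by `ψ₀₀` at each step while `ψ₃₁ = ψ₄₃ = ψ₅₄ = ψ₆₅`, and `ψ₅₆ = 0` since
`[e 0, e 6] = 0`. Then the `e 5`- and `e 6`-components of `ψ [e 1, e 2] = ψ (e 5 + e 6)` give
`ψ₆₆ = ψ₅₅`, i.e. `ψ₀₀ = 0`, and `ψ₂₂ = ψ₅₅ - ψ₁₁ = 3 ψ₀₀ = 0`. -/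

open Finset

noncomputable section

/-- `ℝ⁷` with its standard basis and standard inner product. -/
abbrev V7 : Type := Fin 7 → ℝ

/-- The standard basis vector `e i`. -/
def e (i : Fin 7) : V7 := Pi.single i 1

/-- The standard inner product on `ℝ⁷`. -/
def dot (x y : V7) : ℝ := ∑ i, x i * y i

/-- Structure constants built from a list of entries `(i, j, k, a)`, each meaning that
`μ (e i) (e j)` has component `a` along `e k` (and `μ (e j) (e i)` has component `-a`);
all unlisted basis brackets are `0`. -/
def toC (L : List (Fin 7 × Fin 7 × Fin 7 × ℝ)) (i j k : Fin 7) : ℝ :=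
  (L.map fun t =>
      (if t.1 = i ∧ t.2.1 = j ∧ t.2.2.1 = k then t.2.2.2 else 0)
    - (if t.1 = j ∧ t.2.1 = i ∧ t.2.2.1 = k then t.2.2.2 else 0)).sum

/-- The bilinear skew-symmetric map on `ℝ⁷` with structure constants `c`. -/
def br (c : Fin 7 → Fin 7 → Fin 7 → ℝ) (x y : V7) : V7 :=
  fun k => ∑ i, ∑ j, x i * y j * c i j k

lemma br_add_left (c : Fin 7 → Fin 7 → Fin 7 → ℝ) (x x' y : V7) :
    br c (x + x') y = br c x y + br c x' y := by
  funext k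
  simp only [br, Pi.add_apply, ← Finset.sum_add_distrib]
  exact Finset.sum_congr rfl fun i _ => Finset.sum_congr rfl fun j _ => by ring

lemma br_smul_left (c : Fin 7 → Fin 7 → Fin 7 → ℝ) (r : ℝ) (x y : V7) :
    br c (r • x) y = r • br c x y := by
  funext k
  simp only [br, Pi.smul_apply, smul_eq_mul, Finset.mul_sum]
  exact Finset.sum_congr rfl fun i _ => Finset.sum_congr rfl fun j _ => by ring

lemma br_add_right (c : Fin 7 → Fin 7 → Fin 7 → ℝ) (x y y' : V7) :
    br c x (y + y') = br c x y + br c x y' := by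
  funext k
  simp only [br, Pi.add_apply, ← Finset.sum_add_distrib]
  exact Finset.sum_congr rfl fun i _ => Finset.sum_congr rfl fun j _ => by ring

lemma br_smul_right (c : Fin 7 → Fin 7 → Fin 7 → ℝ) (r : ℝ) (x y : V7) :
    br c x (r • y) = r • br c x y := by
  funext k
  simp only [br, Pi.smul_apply, smul_eq_mul, Finset.mul_sum]
  exact Finset.sum_congr rfl fun i _ => Finset.sum_congr rfl fun j _ => by ring

lemma br_zero_left (c : Fin 7 → Fin 7 → Fin 7 → ℝ) (y : V7) : br c 0 y = 0 := by
  funext k; simp [br]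

lemma br_zero_right (c : Fin 7 → Fin 7 → Fin 7 → ℝ) (x : V7) : br c x 0 = 0 := by
  funext k; simp [br]

/-- The space of derivations of the algebra `(ℝ⁷, br c)`, i.e. the linear maps `D` with
`D (μ x y) = μ (D x) y + μ x (D y)` for all `x, y`, as a submodule of the endomorphisms. -/
def derivations (c : Fin 7 → Fin 7 → Fin 7 → ℝ) : Submodule ℝ (Module.End ℝ V7) where
  carrier := {D | ∀ x y, D (br c x y) = br c (D x) y + br c x (D y)}
  add_mem' := by
    intro D E hD hE x y
    simp only [LinearMap.add_apply, hD x y, hE x y, br_add_left, br_add_right]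
    abel
  zero_mem' := by
    intro x y
    simp [br_zero_left, br_zero_right]
  smul_mem' := by
    intro r D hD x y
    simp only [LinearMap.smul_apply, hD x y, smul_add, br_smul_left, br_smul_right]

/-- The Jacobi identity for the bracket `br c`. -/
def Jacobi (c : Fin 7 → Fin 7 → Fin 7 → ℝ) : Prop :=
  ∀ x y z : V7, br c (br c x y) z + br c (br c y z) x + br c (br c z x) y = 0

/-- Skew-symmetry of the bracket `br c`. -/
def Skew (c : Fin 7 → Fin 7 → Fin 7 → ℝ) : Prop :=
  ∀ x y : V7, br c x y = - br c y x

/-- The diagonal endomorphism `diag (a 1, …, a 7)` of `ℝ⁷`, `e i ↦ a i • e i`. -/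
def diagL (a : Fin 7 → ℝ) : Module.End ℝ V7 :=
  LinearMap.pi fun i => a i • LinearMap.proj i

/-- Structure constants of the bracket with nonzero basis brackets
`[e1,e2]=e4, [e1,e4]=e5, [e1,e5]=e6, [e1,e6]=e7, [e2,e3]=e6+e7, [e3,e4]=-e7`. -/
def c3 : Fin 7 → Fin 7 → Fin 7 → ℝ :=
  toC [(0, 1, 3, (1:ℝ)),
   (0, 3, 4, 1),
   (0, 4, 5, 1),
   (0, 5, 6, 1),
   (1, 2, 5, 1),
   (1, 2, 6, 1),
   (2, 3, 6, -1)]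

theorem trace_eq_sum_apply_single {R ι : Type*} [CommRing R] [Fintype ι] [DecidableEq ι]
    (f : (ι → R) →ₗ[R] ι → R) : LinearMap.trace R _ f = ∑ i, f (Pi.single i 1) i := by
  rw [← Matrix.toLin'_toMatrix' f, Matrix.trace_toLin'_eq]
  simp [Matrix.trace, LinearMap.toMatrix'_apply]

lemma diagL_apply (a x : V7) (i : Fin 7) : diagL a x i = a i * x i := rfl

lemma trace_diagL_comp (a : V7) (f : Module.End ℝ V7) :
    LinearMap.trace ℝ V7 (diagL a ∘ₗ f) = ∑ i, a i * f (e i) i := by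
  simp [trace_eq_sum_apply_single, diagL_apply, e]

lemma toC_swap (L : List (Fin 7 × Fin 7 × Fin 7 × ℝ)) (i j k : Fin 7) :
    toC L j i k = - toC L i j k := by
  induction L with
  | nil => simp [toC]
  | cons t L ih =>
    simp only [toC, List.map_cons, List.sum_cons] at ih ⊢
    rw [ih]; ring

lemma skew_of_antisymm {c : Fin 7 → Fin 7 → Fin 7 → ℝ} (hc : ∀ i j k, c j i k = - c i j k) :
    Skew c := by
  intro x y
  funext k
  simp only [br, Pi.neg_apply, ← Finset.sum_neg_distrib]
  rw [Finset.sum_comm]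
  refine Finset.sum_congr rfl fun i _ => Finset.sum_congr rfl fun j _ => ?_
  rw [hc]; ring

lemma weight_eq_of_toC_ne_zero {L : List (Fin 7 × Fin 7 × Fin 7 × ℝ)} {a : V7}
    (hL : ∀ t ∈ L, a t.2.2.1 = a t.1 + a t.2.1) {i j k : Fin 7} (h : toC L i j k ≠ 0) :
    a k = a i + a j := by
  contrapose! h
  refine List.sum_eq_zero fun r hr => ?_
  obtain ⟨t, ht, rfl⟩ := List.mem_map.1 hr
  have := hL t ht
  split_ifs with h₁ h₂ h₂ <;> grind

lemma diagL_mem_derivations {c : Fin 7 → Fin 7 → Fin 7 → ℝ} {a : V7}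
    (h : ∀ i j k, c i j k ≠ 0 → a k = a i + a j) : diagL a ∈ derivations c := by
  intro x y
  funext k
  simp only [br, diagL_apply, Pi.add_apply, Finset.mul_sum, ← Finset.sum_add_distrib]
  refine Finset.sum_congr rfl fun i _ => Finset.sum_congr rfl fun j _ => ?_
  by_cases hc : c i j k = 0
  · simp [hc]
  · rw [h i j k hc]; ring

lemma br_c3 (x y : V7) : br c3 x y =
    ![0, 0, 0,
      x 0 * y 1 - x 1 * y 0,
      x 0 * y 3 - x 3 * y 0,
      x 0 * y 4 - x 4 * y 0 + x 1 * y 2 - x 2 * y 1,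
      x 0 * y 5 - x 5 * y 0 + x 1 * y 2 - x 2 * y 1 - x 2 * y 3 + x 3 * y 2] := by
  funext k
  fin_cases k <;> simp [br, c3, toC, Fin.sum_univ_seven] <;> ring

lemma skew_c3 : Skew c3 :=
  skew_of_antisymm (toC_swap _)

lemma jacobi_c3 : Jacobi c3 := by
  intro x y z
  simp only [br_c3]
  funext k
  fin_cases k <;> simp <;> ring

lemma diagL_mem_derivations_c3 : diagL ![0, 1, 0, 1, 1, 1, 1] ∈ derivations c3 :=
  diagL_mem_derivations fun _ _ _ => weight_eq_of_toC_ne_zero (by simp)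

lemma diag_entries_zero_two_of_mem_derivations_c3 {ψ : Module.End ℝ V7}
    (hψ : ψ ∈ derivations c3) : ψ (e 0) 0 = 0 ∧ ψ (e 2) 2 = 0 := by
  have component {i j : Fin 7} {v : V7} (hv : br c3 (e i) (e j) = v) (k : Fin 7) :
      ψ v k = br c3 (ψ (e i)) (e j) k + br c3 (e i) (ψ (e j)) k :=
    hv ▸ congrFun (hψ _ _) k
  have b01 : br c3 (e 0) (e 1) = e 3 := by funext k; fin_cases k <;> simp [br_c3, e]
  have b03 : br c3 (e 0) (e 3) = e 4 := by funext k; fin_cases k <;> simp [br_c3, e]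
  have b04 : br c3 (e 0) (e 4) = e 5 := by funext k; fin_cases k <;> simp [br_c3, e]
  have b05 : br c3 (e 0) (e 5) = e 6 := by funext k; fin_cases k <;> simp [br_c3, e]
  have b06 : br c3 (e 0) (e 6) = 0 := by funext k; fin_cases k <;> simp [br_c3, e]
  have b12 : br c3 (e 1) (e 2) = e 5 + e 6 := by funext k; fin_cases k <;> simp [br_c3, e]
  have diag3 : ψ (e 3) 3 = ψ (e 0) 0 + ψ (e 1) 1 := by simpa [br_c3, e] using component b01 3
  have diag4 : ψ (e 4) 4 = ψ (e 0) 0 + ψ (e 3) 3 := by simpa [br_c3, e] using component b03 4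
  have diag5 : ψ (e 5) 5 = ψ (e 0) 0 + ψ (e 4) 4 := by simpa [br_c3, e] using component b04 5
  have diag6 : ψ (e 6) 6 = ψ (e 0) 0 + ψ (e 5) 5 := by simpa [br_c3, e] using component b05 6
  have sub4 : ψ (e 3) 4 = ψ (e 1) 3 := by simpa [br_c3, e] using component b01 4
  have sub5 : ψ (e 4) 5 = ψ (e 3) 4 := by simpa [br_c3, e] using component b03 5
  have sub6 : ψ (e 5) 6 = ψ (e 4) 5 := by simpa [br_c3, e] using component b04 6
  have h65 : ψ (e 6) 5 = 0 := by simpa [br_c3, e] using (component b06 6).symm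
  have top5 : ψ (e 5) 5 + ψ (e 6) 5 = ψ (e 1) 1 + ψ (e 2) 2 := by
    simpa [br_c3, e] using component b12 5
  have top6 : ψ (e 5) 6 + ψ (e 6) 6 = ψ (e 1) 1 + ψ (e 1) 3 + ψ (e 2) 2 := by
    simpa [br_c3, e] using component b12 6
  constructor <;> linarith

/-- The bracket satisfies the Jacobi identity (and is skew-symmetric), `φ` is a derivation
of it, and `φ` is pre-Einstein: `trace (φ ∘ ψ) = trace ψ` for every derivation `ψ`. -/
theorem stmt :
    Skew c3 ∧ Jacobi c3 ∧
    diagL ![0, 1, 0, 1, 1, 1, 1] ∈ derivations c3 ∧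
    ∀ ψ ∈ derivations c3,
      LinearMap.trace ℝ V7 (diagL ![0, 1, 0, 1, 1, 1, 1] ∘ₗ ψ) = LinearMap.trace ℝ V7 ψ := by
  refine ⟨skew_c3, jacobi_c3, diagL_mem_derivations_c3, fun ψ hψ => ?_⟩
  obtain ⟨h0, h2⟩ := diag_entries_zero_two_of_mem_derivations_c3 hψ
  rw [trace_diagL_comp, trace_eq_sum_apply_single]
  simp only [e] at h0 h2
  simp [Fin.sum_univ_seven, e, h0, h2]
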